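/- Suppose min_k lim_{s→+∞} f(k,s)/s > α₁ := η(q)·q_max − η'(p)·p_min, and there exists S > 0 with f(k,−s) ≤ −f(k,s) for s > S. Then the functional J(y) = ∑_{k=1}^{N+2}(p(k)/2)(Δ²y(k-2))² − ∑_{k=1}^{N+1}(q(k)/2)(Δy(k-1))² + ∑_{k=1}^{N}F(k,y(k)) is coercive on E, and the BVP Δ²(p(k)Δ²y(k-2)) + Δ(q(k)Δy(k-1)) + f(k,y(k)) = 0 with zero boundary values has at least one solution. -/

import Mathlib

open Finset Matrix

/-- Forward difference `Δy(k) = y(k+1) - y(k)`. -/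
def fd (y : ℤ → ℝ) (k : ℤ) : ℝ := y (k + 1) - y k

/-- Second forward difference `Δ²y(k) = y(k+2) - 2y(k+1) + y(k)`. -/
def fd2 (y : ℤ → ℝ) (k : ℤ) : ℝ := y (k + 2) - 2 * y (k + 1) + y k

/-- Dirichlet boundary conditions `y(-1) = y(0) = y(N+1) = y(N+2) = 0`. -/
def bc (N : ℕ) (y : ℤ → ℝ) : Prop :=
  y (-1) = 0 ∧ y 0 = 0 ∧ y ((N : ℤ) + 1) = 0 ∧ y ((N : ℤ) + 2) = 0

/-- `y` satisfies `Δ²(p(k)Δ²y(k-2)) + Δ(q(k)Δy(k-1)) + f(k,y(k)) = 0` for `k ∈ Z[1,N]`. -/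
def solves (N : ℕ) (p q : ℤ → ℝ) (f : ℤ → ℝ → ℝ) (y : ℤ → ℝ) : Prop :=
  ∀ k ∈ Finset.Icc (1 : ℤ) (N : ℤ),
    fd2 (fun j => p j * fd2 y (j - 2)) k
      + fd (fun j => q j * fd y (j - 1)) k + f k (y k) = 0

/-- `F(k,s) = ∫₀ˢ f(k,t) dt`. -/
noncomputable def Fint (f : ℤ → ℝ → ℝ) (k : ℤ) (s : ℝ) : ℝ := ∫ t in (0 : ℝ)..s, f k t

/-- The energy functional
`J(y) = ∑_{k=1}^{N+2} (p(k)/2)(Δ²y(k-2))² − ∑_{k=1}^{N+1} (q(k)/2)(Δy(k-1))² + ∑_{k=1}^{N} F(k,y(k))`. -/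
noncomputable def J (N : ℕ) (p q : ℤ → ℝ) (f : ℤ → ℝ → ℝ) (y : ℤ → ℝ) : ℝ :=
  ∑ k ∈ Finset.Icc (1 : ℤ) ((N : ℤ) + 2), p k / 2 * (fd2 y (k - 2)) ^ 2
    - ∑ k ∈ Finset.Icc (1 : ℤ) ((N : ℤ) + 1), q k / 2 * (fd y (k - 1)) ^ 2
    + ∑ k ∈ Finset.Icc (1 : ℤ) (N : ℤ), Fint f k (y k)

open Matrix

/-- The (N+1)×N first-difference matrix under zero boundary conditions. -/
def Vmat (N : ℕ) : Matrix (Fin (N + 1)) (Fin N) ℝ := fun i j =>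
  if (i : ℕ) = (j : ℕ) then 1 else if (i : ℕ) = (j : ℕ) + 1 then -1 else 0

/-- The (N+2)×N second-difference matrix under zero boundary conditions. -/
def Wmat (N : ℕ) : Matrix (Fin (N + 2)) (Fin N) ℝ := fun i j =>
  if (i : ℕ) = (j : ℕ) then 1
  else if (i : ℕ) = (j : ℕ) + 1 then -2
  else if (i : ℕ) = (j : ℕ) + 2 then 1 else 0

/-- `lam` is the smallest eigenvalue of the matrix `M`. -/
def IsSmallestEigenvalue {n : ℕ} (M : Matrix (Fin n) (Fin n) ℝ) (lam : ℝ) : Prop :=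
  IsLeast {μ : ℝ | ∃ x : Fin n → ℝ, x ≠ 0 ∧ M.mulVec x = μ • x} lam


/-!
On the boundary-value space `E`, the quadratic part of `J` is bounded below by `-α₁/2 · ‖y‖²`:
bound `p` below by `p_min` and `q` above by `q_max`, then use `λ ‖x‖² ≤ xᵀ M x` for
`M = VᵀV, WᵀW` where the sign of `p_min` (resp. `q_max`) makes this the useful direction, and the
crude bounds `‖Δ²y‖² ≤ 16 ‖y‖²`, `‖Δy‖² ≤ 4 ‖y‖²` otherwise. Pick `α₁ < β < L k` for all `k`.
Then `f(k,s) ≥ β s` for large `s`, and by `f(k,-s) ≤ -f(k,s)` also `-f(k,-s) ≥ β s`, so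
`F(k,s) ≥ β s²/2 - C` on the whole line and `J(y) ≥ (β - α₁)/2 · ‖y‖² - C`. Being continuous
and coercive on the finite-dimensional space `E`, `J` attains its minimum there, and the
derivative of `J` at the minimiser in the direction of the `k`-th unit vector is exactly the
left-hand side of the difference equation at `k`.
-/

open Filter Topology

theorem IsSmallestEigenvalue.mul_dotProduct_self_le {n : ℕ} {M : Matrix (Fin n) (Fin n) ℝ}
    (hM : M.IsHermitian) {lam : ℝ} (h : IsSmallestEigenvalue M lam) (x : Fin n → ℝ) :
    lam * (x ⬝ᵥ x) ≤ x ⬝ᵥ M *ᵥ x := by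
  have hB : (M - lam • 1).IsHermitian := hM.sub (by simp [Matrix.IsHermitian])
  have hpos : (M - lam • 1).PosSemidef := by
    refine hB.posSemidef_iff_eigenvalues_nonneg.2 fun i => ?_
    have hv : (hB.eigenvectorBasis i).ofLp ≠ 0 :=
      (WithLp.ofLp_eq_zero 2).not.2 (hB.eigenvectorBasis.orthonormal.ne_zero i)
    have hBv := hB.mulVec_eigenvectorBasis i
    rw [sub_mulVec, smul_mulVec, one_mulVec, sub_eq_iff_eq_add, ← add_smul] at hBv
    have := h.2 ⟨_, hv, hBv⟩
    simp only [Pi.zero_apply]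
    linarith
  simpa [sub_mulVec, dotProduct_sub, smul_mulVec, sub_nonneg] using
    hpos.dotProduct_mulVec_nonneg x

section Primitive

variable {f : ℝ → ℝ} {β : ℝ}

theorem exists_sq_le_integral_of_eventually_le (hf : Continuous f)
    (hβ : ∀ᶠ s in atTop, β * s ≤ f s) :
    ∃ C, ∀ s, 0 ≤ s → β / 2 * s ^ 2 - C ≤ ∫ t in (0 : ℝ)..s, f t := by
  obtain ⟨T, hT⟩ := eventually_atTop.1 (hβ.and (eventually_ge_atTop 0))
  have hmono : ∀ s, T ≤ s → (∫ t in (0 : ℝ)..T, f t) - β / 2 * T ^ 2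
      ≤ (∫ t in (0 : ℝ)..s, f t) - β / 2 * s ^ 2 := by
    intro s hs
    have hlin : ∫ t in T..s, β * t ≤ ∫ t in T..s, f t :=
      intervalIntegral.integral_mono_on hs ((continuous_const_mul β).intervalIntegrable _ _)
        (hf.intervalIntegrable _ _) fun t ht => (hT t ht.1).1
    rw [intervalIntegral.integral_const_mul, integral_id,
      ← intervalIntegral.integral_interval_sub_left (hf.intervalIntegrable 0 s)
        (hf.intervalIntegrable 0 T)] at hlin
    linarith
  obtain ⟨m, hm⟩ := isCompact_Icc.bddBelow_image
    (f := fun s => (∫ t in (0 : ℝ)..s, f t) - β / 2 * s ^ 2)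
    (by fun_prop : Continuous _).continuousOn
  have hmin : ∀ s ∈ Set.Icc 0 T, m ≤ (∫ t in (0 : ℝ)..s, f t) - β / 2 * s ^ 2 :=
    fun s hs => hm ⟨s, hs, rfl⟩
  refine ⟨-m, fun s hs => ?_⟩
  rcases le_total s T with hsT | hTs
  · linarith [hmin s ⟨hs, hsT⟩]
  · linarith [hmin T ⟨(hT T le_rfl).2, le_rfl⟩, hmono s hTs]

theorem exists_sq_le_integral (hf : Continuous f) {L S : ℝ}
    (hlim : Tendsto (fun s => f s / s) atTop (𝓝 L)) (hβ : β < L)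
    (hodd : ∀ s, S < s → f (-s) ≤ -f s) :
    ∃ C, ∀ s, β / 2 * s ^ 2 - C ≤ ∫ t in (0 : ℝ)..s, f t := by
  have hpos : ∀ᶠ s in atTop, β * s ≤ f s := by
    filter_upwards [hlim.eventually (eventually_gt_nhds hβ), eventually_gt_atTop 0] with s hs hs0
    exact ((lt_div_iff₀ hs0).1 hs).le
  have hneg : ∀ᶠ s in atTop, β * s ≤ -f (-s) := by
    filter_upwards [hpos, eventually_gt_atTop S] with s h1 h2
    linarith [hodd s h2]
  obtain ⟨C₁, h₁⟩ := exists_sq_le_integral_of_eventually_le hf hpos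
  obtain ⟨C₂, h₂⟩ :=
    exists_sq_le_integral_of_eventually_le (f := fun t => -f (-t)) (by fun_prop) hneg
  refine ⟨max C₁ C₂, fun s => ?_⟩
  rcases le_total 0 s with hs | hs
  · linarith [h₁ s hs, le_max_left C₁ C₂]
  · have hreflect : ∫ t in (0 : ℝ)..(-s), -f (-t) = ∫ t in (0 : ℝ)..s, f t := by
      simp [intervalIntegral.integral_comp_neg, intervalIntegral.integral_symm s 0]
    have := h₂ (-s) (by linarith)
    rw [hreflect, neg_sq] at this
    linarith [le_max_right C₁ C₂]

end Primitive

theorem sum_Icc_one_eq_sum_fin (M : ℕ) (g : ℤ → ℝ) :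
    ∑ k ∈ Icc (1 : ℤ) M, g k = ∑ i : Fin M, g ((i : ℤ) + 1) := by
  symm
  refine Finset.sum_bij' (fun i _ => (i : ℤ) + 1)
    (fun k hk => (⟨(k - 1).toNat, by simp at hk; omega⟩ : Fin M)) ?_ ?_ ?_ ?_ (fun _ _ => rfl)
  all_goals intro a ha
  all_goals simp at ha ⊢
  omega

theorem fd2_sub_two (y : ℤ → ℝ) (k : ℤ) : fd2 y (k - 2) = y k - 2 * y (k - 1) + y (k - 2) := by
  simp only [fd2]; ring_nf

theorem fd_sub_one (y : ℤ → ℝ) (k : ℤ) : fd y (k - 1) = y k - y (k - 1) := by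
  simp only [fd]; ring_nf

section BoundaryConditions

variable {N : ℕ} {y : ℤ → ℝ}

theorem bc_eq_zero (hy : bc N y) {k : ℤ} (hk : k ∈ Icc (-1) ((N : ℤ) + 2))
    (hk' : k ∉ Icc (1 : ℤ) N) : y k = 0 := by
  obtain ⟨h₁, h₂, h₃, h₄⟩ := hy
  simp only [mem_Icc, not_and_or, not_le] at hk hk'
  obtain rfl | rfl | rfl | rfl : k = -1 ∨ k = 0 ∨ k = N + 1 ∨ k = N + 2 := by omega
  all_goals assumption

theorem sum_sq_shift_of_bc (hy : bc N y) {c d : ℤ} (hc : 0 ≤ c) (hcd : c ≤ d) (hd : d ≤ 2) :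
    ∑ k ∈ Icc (1 : ℤ) (N + d), y (k - c) ^ 2 = ∑ k ∈ Icc (1 : ℤ) N, y k ^ 2 := by
  calc ∑ k ∈ Icc (1 : ℤ) (N + d), y (k - c) ^ 2 = ∑ k ∈ Icc (1 - c) (N + d - c), y k ^ 2 :=
        Finset.sum_nbij' (· - c) (· + c) (by intro k hk; simp at hk ⊢; omega)
          (by intro k hk; simp at hk ⊢; omega) (by simp) (by simp) (by simp)
    _ = ∑ k ∈ Icc (1 : ℤ) N, y k ^ 2 := by
        refine (Finset.sum_subset (Icc_subset_Icc (by omega) (by omega)) fun k hk hk' => ?_).symm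
        rw [bc_eq_zero hy (Icc_subset_Icc (by omega) (by omega) hk) hk']
        ring

theorem sum_fd2_sq_le_of_bc (hy : bc N y) :
    ∑ k ∈ Icc (1 : ℤ) (N + 2), fd2 y (k - 2) ^ 2 ≤ 16 * ∑ k ∈ Icc (1 : ℤ) N, y k ^ 2 := by
  have hshift (c : ℤ) (hc : 0 ≤ c) (hc' : c ≤ 2) := sum_sq_shift_of_bc hy hc hc' le_rfl
  calc ∑ k ∈ Icc (1 : ℤ) (N + 2), fd2 y (k - 2) ^ 2
      ≤ ∑ k ∈ Icc (1 : ℤ) (N + 2),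
          (4 * y (k - 0) ^ 2 + 8 * y (k - 1) ^ 2 + 4 * y (k - 2) ^ 2) := by
        refine sum_le_sum fun k _ => ?_
        rw [fd2_sub_two, sub_zero]
        nlinarith [sq_nonneg (y k + y (k - 1)), sq_nonneg (y (k - 1) + y (k - 2)),
          sq_nonneg (y k - y (k - 2))]
    _ = 16 * ∑ k ∈ Icc (1 : ℤ) N, y k ^ 2 := by
        rw [sum_add_distrib, sum_add_distrib, ← mul_sum, ← mul_sum, ← mul_sum,
          hshift 0 le_rfl (by norm_num), hshift 1 (by norm_num) (by norm_num),
          hshift 2 (by norm_num) le_rfl]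
        ring

theorem sum_fd_sq_le_of_bc (hy : bc N y) :
    ∑ k ∈ Icc (1 : ℤ) (N + 1), fd y (k - 1) ^ 2 ≤ 4 * ∑ k ∈ Icc (1 : ℤ) N, y k ^ 2 := by
  have hshift (c : ℤ) (hc : 0 ≤ c) (hc' : c ≤ 1) :=
    sum_sq_shift_of_bc hy hc hc' (by norm_num : (1 : ℤ) ≤ 2)
  calc ∑ k ∈ Icc (1 : ℤ) (N + 1), fd y (k - 1) ^ 2
      ≤ ∑ k ∈ Icc (1 : ℤ) (N + 1), (2 * y (k - 0) ^ 2 + 2 * y (k - 1) ^ 2) := by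
        refine sum_le_sum fun k _ => ?_
        rw [fd_sub_one, sub_zero]
        nlinarith [sq_nonneg (y k + y (k - 1))]
    _ = 4 * ∑ k ∈ Icc (1 : ℤ) N, y k ^ 2 := by
        rw [sum_add_distrib, ← mul_sum, ← mul_sum, hshift 0 le_rfl (by norm_num),
          hshift 1 (by norm_num) le_rfl]
        ring

def vecOf (N : ℕ) (y : ℤ → ℝ) : Fin N → ℝ := fun i => y ((i : ℤ) + 1)

theorem dotProduct_vecOf_self (N : ℕ) (y : ℤ → ℝ) :
    vecOf N y ⬝ᵥ vecOf N y = ∑ k ∈ Icc (1 : ℤ) N, y k ^ 2 := by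
  simp only [dotProduct, vecOf, sum_Icc_one_eq_sum_fin, sq]

theorem sum_ite_vecOf_of_bc (hy : bc N y) {a c : ℕ} (hc : c ≤ 2) (ha : a ≤ N + 1) :
    ∑ j : Fin N, (if a = (j : ℕ) + c then vecOf N y j else 0) = y ((a : ℤ) + 1 - c) := by
  by_cases h : c ≤ a ∧ a - c < N
  · rw [Finset.sum_eq_single_of_mem (⟨a - c, h.2⟩ : Fin N) (mem_univ _),
      if_pos (by simp; omega)]
    · simp only [vecOf]; congr 1; omega
    · intro j _ hj
      exact if_neg fun hj' => hj (Fin.ext (by simp; omega))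
  · rw [Finset.sum_eq_zero fun j _ => if_neg (by omega),
      bc_eq_zero hy (by simp; omega) (by simp; omega)]

theorem mulVec_Wmat_vecOf (hy : bc N y) (i : Fin (N + 2)) :
    (Wmat N *ᵥ vecOf N y) i = fd2 y ((i : ℤ) - 1) := by
  have hentry (j : Fin N) : Wmat N i j * vecOf N y j =
      (if (i : ℕ) = j + 0 then vecOf N y j else 0)
        - 2 * (if (i : ℕ) = j + 1 then vecOf N y j else 0)
        + (if (i : ℕ) = j + 2 then vecOf N y j else 0) := by
    simp only [Wmat]
    split_ifs <;> first | omega | ring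
  simp only [mulVec, dotProduct, hentry, sum_add_distrib, sum_sub_distrib, ← mul_sum]
  rw [sum_ite_vecOf_of_bc hy (by norm_num) (by omega),
    sum_ite_vecOf_of_bc hy (by norm_num) (by omega), sum_ite_vecOf_of_bc hy le_rfl (by omega), fd2]
  ring_nf

theorem mulVec_Vmat_vecOf (hy : bc N y) (i : Fin (N + 1)) :
    (Vmat N *ᵥ vecOf N y) i = fd y i := by
  have hentry (j : Fin N) : Vmat N i j * vecOf N y j =
      (if (i : ℕ) = j + 0 then vecOf N y j else 0)
        - (if (i : ℕ) = j + 1 then vecOf N y j else 0) := by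
    simp only [Vmat]
    split_ifs <;> first | omega | ring
  simp only [mulVec, dotProduct, hentry, sum_sub_distrib]
  rw [sum_ite_vecOf_of_bc hy (by norm_num) (by omega),
    sum_ite_vecOf_of_bc hy (by norm_num) (by omega), fd]
  ring_nf

theorem sum_fd2_sq_eq_of_bc (hy : bc N y) :
    ∑ k ∈ Icc (1 : ℤ) (N + 2), fd2 y (k - 2) ^ 2
      = vecOf N y ⬝ᵥ ((Wmat N)ᵀ * Wmat N) *ᵥ vecOf N y := by
  rw [← mulVec_mulVec, dotProduct_mulVec, vecMul_transpose, dotProduct]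
  simp only [mulVec_Wmat_vecOf hy, ← sq]
  rw [show ((N : ℤ) + 2) = ((N + 2 : ℕ) : ℤ) by push_cast; ring, sum_Icc_one_eq_sum_fin]
  ring_nf

theorem sum_fd_sq_eq_of_bc (hy : bc N y) :
    ∑ k ∈ Icc (1 : ℤ) (N + 1), fd y (k - 1) ^ 2
      = vecOf N y ⬝ᵥ ((Vmat N)ᵀ * Vmat N) *ᵥ vecOf N y := by
  rw [← mulVec_mulVec, dotProduct_mulVec, vecMul_transpose, dotProduct]
  simp only [mulVec_Vmat_vecOf hy, ← sq]
  rw [show ((N : ℤ) + 1) = ((N + 1 : ℕ) : ℤ) by push_cast; ring, sum_Icc_one_eq_sum_fin]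
  ring_nf

theorem mul_sum_sq_le_sum_fd2_sq {lam : ℝ} (hlam : IsSmallestEigenvalue ((Wmat N)ᵀ * Wmat N) lam)
    (hy : bc N y) :
    lam * ∑ k ∈ Icc (1 : ℤ) N, y k ^ 2 ≤ ∑ k ∈ Icc (1 : ℤ) (N + 2), fd2 y (k - 2) ^ 2 := by
  rw [sum_fd2_sq_eq_of_bc hy, ← dotProduct_vecOf_self]
  exact hlam.mul_dotProduct_self_le
    (by simpa using isHermitian_conjTranspose_mul_self (Wmat N)) _

theorem mul_sum_sq_le_sum_fd_sq {lam : ℝ} (hlam : IsSmallestEigenvalue ((Vmat N)ᵀ * Vmat N) lam)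
    (hy : bc N y) :
    lam * ∑ k ∈ Icc (1 : ℤ) N, y k ^ 2 ≤ ∑ k ∈ Icc (1 : ℤ) (N + 1), fd y (k - 1) ^ 2 := by
  rw [sum_fd_sq_eq_of_bc hy, ← dotProduct_vecOf_self]
  exact hlam.mul_dotProduct_self_le
    (by simpa using isHermitian_conjTranspose_mul_self (Vmat N)) _

end BoundaryConditions

section WeightedSum

variable {ι : Type*} {s : Finset ι} {w g : ι → ℝ} {lam B A : ℝ}

theorem ite_mul_le_sum_mul {m : ℝ} (hw : ∀ k ∈ s, m ≤ w k) (hg : ∀ k ∈ s, 0 ≤ g k)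
    (hlam : lam * A ≤ ∑ k ∈ s, g k) (hB : ∑ k ∈ s, g k ≤ B * A) :
    (if 0 ≤ m then lam else B) * m * A ≤ ∑ k ∈ s, w k * g k := by
  have : m * ∑ k ∈ s, g k ≤ ∑ k ∈ s, w k * g k := by
    rw [mul_sum]
    exact sum_le_sum fun k hk => mul_le_mul_of_nonneg_right (hw k hk) (hg k hk)
  split_ifs with hm <;> nlinarith

theorem sum_mul_le_ite_mul {M : ℝ} (hw : ∀ k ∈ s, w k ≤ M) (hg : ∀ k ∈ s, 0 ≤ g k)
    (hlam : lam * A ≤ ∑ k ∈ s, g k) (hB : ∑ k ∈ s, g k ≤ B * A) :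
    ∑ k ∈ s, w k * g k ≤ (if M < 0 then lam else B) * M * A := by
  have : ∑ k ∈ s, w k * g k ≤ M * ∑ k ∈ s, g k := by
    rw [mul_sum]
    exact sum_le_sum fun k hk => mul_le_mul_of_nonneg_right (hw k hk) (hg k hk)
  split_ifs with hM <;> nlinarith

end WeightedSum

section Functional

variable {N : ℕ} {p q : ℤ → ℝ} {f : ℤ → ℝ → ℝ}

theorem le_J_of_bc {lam1 lam2 pmin qmax β : ℝ} {C : ℤ → ℝ}
    (hlam1 : IsSmallestEigenvalue ((Vmat N)ᵀ * Vmat N) lam1)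
    (hlam2 : IsSmallestEigenvalue ((Wmat N)ᵀ * Wmat N) lam2)
    (hpmin : pmin ∈ lowerBounds (p '' Set.Icc (1 : ℤ) ((N : ℤ) + 2)))
    (hqmax : qmax ∈ upperBounds (q '' Set.Icc (1 : ℤ) ((N : ℤ) + 1)))
    (hF : ∀ k ∈ Icc (1 : ℤ) N, ∀ s, β / 2 * s ^ 2 - C k ≤ Fint f k s)
    {y : ℤ → ℝ} (hy : bc N y) :
    ((if 0 ≤ pmin then lam2 else 16) * pmin - (if qmax < 0 then lam1 else 4) * qmax + β) / 2
        * ∑ k ∈ Icc (1 : ℤ) N, y k ^ 2 - ∑ k ∈ Icc (1 : ℤ) N, C k ≤ J N p q f y := by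
  have hp := ite_mul_le_sum_mul (fun k hk => hpmin ⟨k, by simpa using hk, rfl⟩)
    (fun k _ => sq_nonneg _) (mul_sum_sq_le_sum_fd2_sq hlam2 hy) (sum_fd2_sq_le_of_bc hy)
  have hq := sum_mul_le_ite_mul (fun k hk => hqmax ⟨k, by simpa using hk, rfl⟩)
    (fun k _ => sq_nonneg _) (mul_sum_sq_le_sum_fd_sq hlam1 hy) (sum_fd_sq_le_of_bc hy)
  have hFsum : β / 2 * ∑ k ∈ Icc (1 : ℤ) N, y k ^ 2 - ∑ k ∈ Icc (1 : ℤ) N, C k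
      ≤ ∑ k ∈ Icc (1 : ℤ) N, Fint f k (y k) := by
    rw [mul_sum, ← sum_sub_distrib]
    exact sum_le_sum fun k hk => hF k hk (y k)
  simp only [_root_.J, div_mul_eq_mul_div, ← sum_div]
  linarith

theorem hasDerivAt_Fint {k : ℤ} (hf : Continuous (f k)) (s : ℝ) :
    HasDerivAt (Fint f k) (f k s) s :=
  intervalIntegral.integral_hasDerivAt_right (hf.intervalIntegrable 0 s)
    hf.aestronglyMeasurable.stronglyMeasurableAtFilter hf.continuousAt

theorem continuous_J (hf : ∀ k ∈ Icc (1 : ℤ) N, Continuous (f k)) :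
    Continuous (J N p q f) := by
  have hF (k : ℤ) (hk : k ∈ Icc (1 : ℤ) N) : Continuous (Fint f k) :=
    continuous_iff_continuousAt.2 fun s => (hasDerivAt_Fint (hf k hk) s).continuousAt
  unfold _root_.J fd2 fd
  exact .add (by fun_prop) (continuous_finsetSum _ fun k hk => (hF k hk).comp (continuous_apply k))

/-- The space `E`, each of its elements extended by zero outside `Z[-1,N+2]`. -/
def spaceE (N : ℕ) : Set (ℤ → ℝ) := {y | ∀ k ∉ Icc (1 : ℤ) N, y k = 0}

theorem bc_of_mem_spaceE {y : ℤ → ℝ} (hy : y ∈ spaceE N) : bc N y :=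
  ⟨hy _ (by simp), hy _ (by simp), hy _ (by simp), hy _ (by simp)⟩

theorem isClosed_spaceE (N : ℕ) : IsClosed (spaceE N) := by
  simp only [spaceE, Set.ofPred_forall]
  exact isClosed_iInter fun k => isClosed_iInter fun _ =>
    isClosed_eq (continuous_apply k) continuous_const

theorem exists_isMinOn_J (hf : ∀ k ∈ Icc (1 : ℤ) N, Continuous (f k)) {c C : ℝ} (hc : 0 < c)
    (hJ : ∀ y, bc N y → c * ∑ k ∈ Icc (1 : ℤ) N, y k ^ 2 - C ≤ J N p q f y) :
    ∃ y₀ ∈ spaceE N, IsMinOn (J N p q f) (spaceE N) y₀ := by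
  set K := spaceE N ∩ {y | J N p q f y ≤ J N p q f 0}
  set r := Real.sqrt ((J N p q f 0 + C) / c)
  -- `K` is closed in the product topology and lies in a box, hence is compact by Tychonoff.
  have hKbox : K ⊆ Set.univ.pi fun _ => Set.Icc (-r) r := by
    rintro y ⟨hyE, hyJ : J N p q f y ≤ J N p q f 0⟩ k -
    by_cases hk : k ∈ Icc (1 : ℤ) N
    · have hsq : y k ^ 2 ≤ (J N p q f 0 + C) / c := by
        rw [le_div_iff₀ hc]
        have := single_le_sum (fun k _ => sq_nonneg (y k)) hk
        nlinarith [hJ y (bc_of_mem_spaceE hyE)]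
      exact abs_le.1 (Real.abs_le_sqrt hsq)
    · simp [hyE k hk, r]
  have hK : IsCompact K := (isCompact_univ_pi fun _ => isCompact_Icc).of_isClosed_subset
    ((isClosed_spaceE N).inter (isClosed_le (continuous_J hf) continuous_const)) hKbox
  have h0 : (0 : ℤ → ℝ) ∈ K := ⟨fun _ _ => rfl, le_refl (J N p q f 0)⟩
  obtain ⟨y₀, hy₀, hmin⟩ := hK.exists_isMinOn ⟨0, h0⟩ (continuous_J hf).continuousOn
  refine ⟨y₀, hy₀.1, fun y hy => ?_⟩
  by_cases hyJ : J N p q f y ≤ J N p q f 0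
  · exact hmin ⟨hy, hyJ⟩
  · exact (isMinOn_iff.1 hmin 0 h0).trans (le_of_not_ge hyJ)

theorem hasDerivAt_half_mul_sq (c a b : ℝ) :
    HasDerivAt (fun t : ℝ => c / 2 * (a + t * b) ^ 2) (c * a * b) 0 :=
  ((((hasDerivAt_id (0 : ℝ)).mul_const b).const_add a).pow 2 |>.const_mul (c / 2)).congr_deriv
    (by simp; ring)

theorem hasDerivAt_J_add_smul (hf : ∀ k ∈ Icc (1 : ℤ) N, Continuous (f k)) (y δ : ℤ → ℝ) :
    HasDerivAt (fun t : ℝ => J N p q f (y + t • δ))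
      (∑ k ∈ Icc (1 : ℤ) (N + 2), p k * fd2 y (k - 2) * fd2 δ (k - 2)
        - ∑ k ∈ Icc (1 : ℤ) (N + 1), q k * fd y (k - 1) * fd δ (k - 1)
        + ∑ k ∈ Icc (1 : ℤ) N, f k (y k) * δ k) 0 := by
  have hfd2 (m : ℤ) (t : ℝ) : fd2 (y + t • δ) m = fd2 y m + t * fd2 δ m := by
    simp only [fd2, Pi.add_apply, Pi.smul_apply, smul_eq_mul]; ring
  have hfd (m : ℤ) (t : ℝ) : fd (y + t • δ) m = fd y m + t * fd δ m := by
    simp only [fd, Pi.add_apply, Pi.smul_apply, smul_eq_mul]; ring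
  simp only [_root_.J, hfd2, hfd, Pi.add_apply, Pi.smul_apply, smul_eq_mul]
  refine .add (.sub (.fun_sum fun k _ => hasDerivAt_half_mul_sq _ _ _)
    (.fun_sum fun k _ => hasDerivAt_half_mul_sq _ _ _)) (.fun_sum fun k hk => ?_)
  exact ((hasDerivAt_Fint (hf k hk) _).comp (0 : ℝ)
    (((hasDerivAt_id (0 : ℝ)).mul_const (δ k)).const_add (y k))).congr_deriv (by simp)

theorem sum_mul_fd2_single {M : ℕ} (a : ℤ → ℝ) {k : ℤ} (hk : k ∈ Icc (1 : ℤ) M) :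
    ∑ i ∈ Icc (1 : ℤ) (M + 2), a i * fd2 (Pi.single k 1) (i - 2) = fd2 a k := by
  rw [mem_Icc] at hk
  simp only [fd2_sub_two, Pi.single_apply, sub_eq_iff_eq_add, mul_add, mul_sub, sum_add_distrib,
    sum_sub_distrib, mul_ite, mul_one, mul_zero, sum_ite_eq', mem_Icc]
  rw [if_pos (by omega), if_pos (by omega), if_pos (by omega), fd2]
  ring_nf

theorem sum_mul_fd_single {M : ℕ} (a : ℤ → ℝ) {k : ℤ} (hk : k ∈ Icc (1 : ℤ) M) :
    ∑ i ∈ Icc (1 : ℤ) (M + 1), a i * fd (Pi.single k 1) (i - 1) = -fd a k := by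
  rw [mem_Icc] at hk
  simp only [fd_sub_one, Pi.single_apply, sub_eq_iff_eq_add, mul_sub, sum_sub_distrib,
    mul_ite, mul_one, mul_zero, sum_ite_eq', mem_Icc]
  rw [if_pos (by omega), if_pos (by omega), fd]
  ring_nf

theorem solves_of_isMinOn (hf : ∀ k ∈ Icc (1 : ℤ) N, Continuous (f k)) {y : ℤ → ℝ}
    (hy : y ∈ spaceE N) (hmin : IsMinOn (J N p q f) (spaceE N) y) : solves N p q f y := by
  intro k hk
  have hmem (t : ℝ) : y + t • Pi.single k 1 ∈ spaceE N := fun i hi => by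
    simp [hy i hi, show i ≠ k by rintro rfl; exact hi hk]
  have hloc : IsLocalMin (fun t : ℝ => J N p q f (y + t • Pi.single k 1)) 0 :=
    Eventually.of_forall fun t => by simpa using isMinOn_iff.1 hmin _ (hmem t)
  have := hloc.hasDerivAt_eq_zero (hasDerivAt_J_add_smul hf y _)
  rw [sum_mul_fd2_single _ hk, sum_mul_fd_single _ hk] at this
  simpa [Pi.single_apply, hk] using this

end Functional

theorem stmt_14_general (N : ℕ) (p q : ℤ → ℝ) (f : ℤ → ℝ → ℝ)
    (hf : ∀ k ∈ Finset.Icc (1 : ℤ) (N : ℤ), Continuous (f k))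
    (lam1 lam2 : ℝ)
    (hlam1 : IsSmallestEigenvalue ((Vmat N)ᵀ * Vmat N) lam1)
    (hlam2 : IsSmallestEigenvalue ((Wmat N)ᵀ * Wmat N) lam2)
    (pmin qmax : ℝ)
    (hpmin : IsLeast (p '' Set.Icc (1 : ℤ) ((N : ℤ) + 2)) pmin)
    (hqmax : IsGreatest (q '' Set.Icc (1 : ℤ) ((N : ℤ) + 1)) qmax)
    (alpha1 : ℝ)
    (halpha1 : alpha1 = (if qmax < 0 then lam1 else 4) * qmax
        - (if 0 ≤ pmin then lam2 else 16) * pmin)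
    (L : ℤ → ℝ)
    (hlim : ∀ k ∈ Finset.Icc (1 : ℤ) (N : ℤ),
      Filter.Tendsto (fun s : ℝ => f k s / s) Filter.atTop (nhds (L k)))
    (hgt : ∀ k ∈ Finset.Icc (1 : ℤ) (N : ℤ), alpha1 < L k)
    (S : ℝ)
    (hodd : ∀ k ∈ Finset.Icc (1 : ℤ) (N : ℤ), ∀ s : ℝ, S < s → f k (-s) ≤ -f k s) :
    (∀ C : ℝ, ∃ R : ℝ, ∀ y : ℤ → ℝ, bc N y →
        R ≤ ∑ k ∈ Finset.Icc (1 : ℤ) (N : ℤ), (y k) ^ 2 → C ≤ J N p q f y)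
      ∧ ∃ y : ℤ → ℝ, bc N y ∧ solves N p q f y := by
  obtain ⟨β, hβL, hαβ⟩ := (((eventually_all_finset _).2 fun k hk =>
    eventually_lt_nhds (hgt k hk)).filter_mono nhdsWithin_le_nhds).and
      (self_mem_nhdsWithin : ∀ᶠ β in 𝓝[>] alpha1, alpha1 < β) |>.exists
  choose! C hC using fun k hk =>
    exists_sq_le_integral (hf k hk) (hlim k hk) (hβL k hk) (hodd k hk)
  have hc : 0 < (β - alpha1) / 2 := by linarith
  have hJ (y : ℤ → ℝ) (hy : bc N y) : (β - alpha1) / 2 * ∑ k ∈ Icc (1 : ℤ) N, y k ^ 2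
      - ∑ k ∈ Icc (1 : ℤ) N, C k ≤ J N p q f y := by
    convert le_J_of_bc hlam1 hlam2 hpmin.2 hqmax.2 hC hy using 3
    rw [halpha1]; ring
  refine ⟨fun C₀ => ⟨(C₀ + ∑ k ∈ Icc (1 : ℤ) N, C k) / ((β - alpha1) / 2),
    fun y hy hR => ?_⟩, ?_⟩
  · rw [div_le_iff₀ hc] at hR
    linarith [hJ y hy]
  · obtain ⟨y, hyE, hmin⟩ := exists_isMinOn_J hf hc hJ
    exact ⟨y, bc_of_mem_spaceE hyE, solves_of_isMinOn hf hyE hmin⟩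

/-- If `lim_{s→+∞} f(k,s)/s > α₁ = η(q)·q_max − η'(p)·p_min` for every `k` and
`f(k,−s) ≤ −f(k,s)` for `s > S`, then `J` is coercive on `E` and the BVP has at
least one solution. -/
theorem stmt_14 (N : ℕ) (hN : 1 ≤ N) (p q : ℤ → ℝ) (f : ℤ → ℝ → ℝ)
    (hf : ∀ k ∈ Finset.Icc (1 : ℤ) (N : ℤ), Continuous (f k))
    (lam1 lam2 : ℝ)
    (hlam1 : IsSmallestEigenvalue ((Vmat N)ᵀ * Vmat N) lam1)
    (hlam2 : IsSmallestEigenvalue ((Wmat N)ᵀ * Wmat N) lam2)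
    (pmin qmax : ℝ)
    (hpmin : IsLeast (p '' Set.Icc (1 : ℤ) ((N : ℤ) + 2)) pmin)
    (hqmax : IsGreatest (q '' Set.Icc (1 : ℤ) ((N : ℤ) + 1)) qmax)
    (alpha1 : ℝ)
    (halpha1 : alpha1 = (if qmax < 0 then lam1 else 4) * qmax
        - (if 0 ≤ pmin then lam2 else 16) * pmin)
    (L : ℤ → ℝ)
    (hlim : ∀ k ∈ Finset.Icc (1 : ℤ) (N : ℤ),
      Filter.Tendsto (fun s : ℝ => f k s / s) Filter.atTop (nhds (L k)))
    (hgt : ∀ k ∈ Finset.Icc (1 : ℤ) (N : ℤ), alpha1 < L k)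
    (S : ℝ) (hS : 0 < S)
    (hodd : ∀ k ∈ Finset.Icc (1 : ℤ) (N : ℤ), ∀ s : ℝ, S < s → f k (-s) ≤ -f k s) :
    (∀ C : ℝ, ∃ R : ℝ, ∀ y : ℤ → ℝ, bc N y →
        R ≤ ∑ k ∈ Finset.Icc (1 : ℤ) (N : ℤ), (y k) ^ 2 → C ≤ J N p q f y)
      ∧ ∃ y : ℤ → ℝ, bc N y ∧ solves N p q f y :=
  stmt_14_general N p q f hf lam1 lam2 hlam1 hlam2 pmin qmax hpmin hqmax alpha1 halpha1 L hlim hgt S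
    hodd
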